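/- Let m ≥ 2 and h ≥ 1, and let T(m,h) be the complete m-ary tree of height h with n = (m^{h+1}−1)/(m−1) vertices. Then the guaranteed gain of Player 1 with the strategy μ1 is GGain(T(m,h), μ1) = Gain(T(m,h), μ1, Z(root)) = m^{h+1}(m^h−1)/(m^{h+2}−m^{h+1}+m^h−1) = (n−1)((m−1)n+1)/(n(m²−m+1)+m−1); in particular the minimum of Gain(T(m,h), μ1, Z(y)) over vertices y is attained at the root. -/

import Mathlib

/-- The competitive-diffusion payoff of Player 1 with starting vertex `x` against
starting vertex `y`: the number of vertices strictly closer to `x` than to `y`. -/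
noncomputable def gain {V : Type*} (G : SimpleGraph V) (x y : V) : ℕ :=
  {u : V | G.dist u x < G.dist u y}.ncard

/-- The expected gain of Player 1 playing mixed strategy `X` against mixed strategy `Y`. -/
noncomputable def Gain {V : Type*} (G : SimpleGraph V) [Fintype V] (X Y : V → ℝ) : ℝ :=
  ∑ x : V, ∑ y : V, X x * Y y * (gain G x y : ℝ)

/-- The pure strategy `Z(v)` concentrated on vertex `v`. -/
def pureStrat {V : Type*} [DecidableEq V] (v : V) : V → ℝ := fun u => if u = v then 1 else 0

/-- Vertices of the complete `m`-ary tree of height `h`: lists over `Fin m` of length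
at most `h`; the length of the list is the depth of the vertex. -/
def TreeVert (m h : ℕ) := {l : List (Fin m) // l.length ≤ h}

noncomputable instance (m h : ℕ) : Fintype (TreeVert m h) :=
  (List.finite_length_le (Fin m) h).fintype

instance (m h : ℕ) : DecidableEq (TreeVert m h) := Subtype.instDecidableEq

instance (m h : ℕ) : Nonempty (TreeVert m h) := ⟨⟨[], by simp⟩⟩

/-- The complete `m`-ary tree of height `h`: each vertex of depth `< h` has exactly
`m` children, obtained by prepending an element of `Fin m`. -/
def CompleteTree (m h : ℕ) : SimpleGraph (TreeVert m h) :=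
  SimpleGraph.fromRel (fun x y => x.1 = y.1.tail ∧ y.1.length = x.1.length + 1)

/-- The root of the complete `m`-ary tree. -/
def root (m h : ℕ) : TreeVert m h := ⟨[], by simp⟩

noncomputable def alpha1 (m h : ℕ) : ℝ :=
  ((m : ℝ) ^ h - 1) / ((m : ℝ) ^ (h + 2) - (m : ℝ) ^ (h + 1) + (m : ℝ) ^ h - 1)

noncomputable def beta1 (m h : ℕ) : ℝ :=
  ((m : ℝ) - 1) * (m : ℝ) ^ h / ((m : ℝ) ^ (h + 2) - (m : ℝ) ^ (h + 1) + (m : ℝ) ^ h - 1)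

noncomputable def alpha2 (m h : ℕ) : ℝ :=
  ((m : ℝ) - 1) * ((m : ℝ) ^ (h + 1) - (m : ℝ) ^ h + 1) /
    ((m : ℝ) ^ (h + 2) - (m : ℝ) ^ (h + 1) + (m : ℝ) ^ h - 1)

noncomputable def beta2 (m h : ℕ) : ℝ :=
  ((m : ℝ) ^ h - 1) / ((m : ℝ) ^ (h + 2) - (m : ℝ) ^ (h + 1) + (m : ℝ) ^ h - 1)

/-- The mixed strategy `μ₁`: probability `α₁` on the root, `β₁` on each depth-1 vertex. -/
noncomputable def mu1 (m h : ℕ) : TreeVert m h → ℝ := fun v =>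
  if v.1.length = 0 then alpha1 m h else if v.1.length = 1 then beta1 m h else 0

/-- The mixed strategy `μ₂`: probability `α₂` on the root, `β₂` on each depth-1 vertex. -/
noncomputable def mu2 (m h : ℕ) : TreeVert m h → ℝ := fun v =>
  if v.1.length = 0 then alpha2 m h else if v.1.length = 1 then beta2 m h else 0

/-
Vertices are lists, the parent of a vertex being its tail, so the branch below a depth-one vertex
`[a]` consists of the lists ending in `a`. Two distance estimates suffice: a vertex is within its
depth difference of each ancestor, and a vertex is at least the sum of the depths away from any
vertex outside its branch, because depth signed by branch membership is 1-Lipschitz.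
Consequently, against the root each `[a]` wins exactly its branch, of size `N = |T(m, h-1)|`, so
`Gain(μ₁, Z(root)) = β₁ m N`. Against a vertex `y` of branch `a`, the root wins at least the
`(m-1)N + 1` vertices outside that branch and every other `[b]` wins at least its own branch;
the weights of `μ₁` make `α₁((m-1)N + 1) + β₁(m-1)N = β₁ m N`.
-/

namespace SimpleGraph

variable {V : Type*} {G : SimpleGraph V}

theorem Walk.abs_sub_le_length (f : V → ℤ) (hf : ∀ a b, G.Adj a b → |f a - f b| ≤ 1)
    {u v : V} (p : G.Walk u v) : |f u - f v| ≤ p.length := by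
  induction p with
  | nil => simp
  | cons hadj p ih =>
    rw [Walk.length_cons, Nat.cast_succ]
    calc _ ≤ |f _ - f _| + |f _ - f _| := abs_sub_le _ _ _
      _ ≤ _ := by linarith [hf _ _ hadj]

theorem Reachable.abs_sub_le_dist (f : V → ℤ) (hf : ∀ a b, G.Adj a b → |f a - f b| ≤ 1)
    {u v : V} (huv : G.Reachable u v) : |f u - f v| ≤ G.dist u v := by
  obtain ⟨p, hp⟩ := huv.exists_walk_length_eq_dist
  exact hp ▸ p.abs_sub_le_length f hf

end SimpleGraph

theorem gain_self {V : Type*} (G : SimpleGraph V) (x : V) : gain G x x = 0 := by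
  simp [gain]

theorem Gain_pureStrat {V : Type*} [Fintype V] [DecidableEq V] (G : SimpleGraph V)
    (X : V → ℝ) (y : V) : Gain G X (pureStrat y) = ∑ x, X x * (gain G x y : ℝ) := by
  simp [Gain, pureStrat]

theorem mu1_denom_pos {m : ℕ} (hm : 2 ≤ m) (h : ℕ) :
    0 < (m : ℝ) ^ (h + 2) - (m : ℝ) ^ (h + 1) + (m : ℝ) ^ h - 1 := by
  have hm' : (2 : ℝ) ≤ m := by exact_mod_cast hm
  have hpow : (1 : ℝ) ≤ (m : ℝ) ^ h := one_le_pow₀ (by linarith)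
  have hfactor : (m : ℝ) ^ (h + 2) - (m : ℝ) ^ (h + 1) + (m : ℝ) ^ h - 1 =
      (m : ℝ) ^ h * ((m : ℝ) * (m - 1) + 1) - 1 := by ring
  have hquad : (3 : ℝ) ≤ (m : ℝ) * (m - 1) + 1 := by nlinarith
  nlinarith [mul_le_mul hpow hquad (by norm_num) (by positivity)]

theorem alpha1_nonneg {m : ℕ} (hm : 2 ≤ m) (h : ℕ) : 0 ≤ alpha1 m h := by
  have hpow : (1 : ℝ) ≤ (m : ℝ) ^ h := one_le_pow₀ (by exact_mod_cast (by omega : 1 ≤ m))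
  exact div_nonneg (by linarith) (mu1_denom_pos hm h).le

theorem beta1_nonneg {m : ℕ} (hm : 2 ≤ m) (h : ℕ) : 0 ≤ beta1 m h := by
  have hm' : (1 : ℝ) ≤ m := by exact_mod_cast (by omega : 1 ≤ m)
  exact div_nonneg (mul_nonneg (by linarith) (by positivity)) (mu1_denom_pos hm h).le

namespace CompleteTree

open SimpleGraph

section

variable {m h : ℕ}

theorem adj_iff {u v : TreeVert m h} : (CompleteTree m h).Adj u v ↔
    u.1 = v.1.tail ∧ v.1.length = u.1.length + 1 ∨
      v.1 = u.1.tail ∧ u.1.length = v.1.length + 1 := by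
  rw [CompleteTree, fromRel_adj]
  refine ⟨And.right, fun H => ⟨fun huv => ?_, H⟩⟩
  subst huv
  omega

theorem exists_walk_of_eq_append {t : List (Fin m)} {u v : TreeVert m h}
    (huv : u.1 = t ++ v.1) :
    ∃ p : (CompleteTree m h).Walk u v, p.length = t.length := by
  induction t generalizing u with
  | nil =>
    obtain rfl : u = v := Subtype.ext huv
    exact ⟨Walk.nil, rfl⟩
  | cons a t ih =>
    let w : TreeVert m h := ⟨t ++ v.1, by have := u.2; simp_all; omega⟩
    obtain ⟨p, hp⟩ := ih (u := w) rfl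
    have huw : (CompleteTree m h).Adj u w :=
      adj_iff.2 (Or.inr ⟨by simp [w, huv], by simp [w, huv]⟩)
    exact ⟨Walk.cons huw p, congrArg Nat.succ hp⟩

theorem dist_le_of_eq_append {t : List (Fin m)} {u v : TreeVert m h} (huv : u.1 = t ++ v.1) :
    (CompleteTree m h).dist u v ≤ t.length := by
  obtain ⟨p, hp⟩ := exists_walk_of_eq_append huv
  exact hp ▸ dist_le p

theorem dist_root_le (u : TreeVert m h) : (CompleteTree m h).dist u (root m h) ≤ u.1.length :=
  dist_le_of_eq_append (List.append_nil u.1).symm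

theorem connected : (CompleteTree m h).Connected := by
  have hroot (u : TreeVert m h) : (CompleteTree m h).Reachable u (root m h) :=
    (exists_walk_of_eq_append (List.append_nil u.1).symm).elim fun p _ => p.reachable
  exact (connected_iff _).2 ⟨fun u v => (hroot u).trans (hroot v).symm, inferInstance⟩

def branch (a : Fin m) : Set (TreeVert m h) := {u | [a] <:+ u.1}

theorem eq_of_mem_branch {a b : Fin m} {u : TreeVert m h} (ha : u ∈ branch a)
    (hb : u ∈ branch b) : a = b := by
  have ha : u.1.getLast? = some a := List.singleton_suffix_iff_getLast?_eq_some.1 ha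
  have hb : u.1.getLast? = some b := List.singleton_suffix_iff_getLast?_eq_some.1 hb
  exact Option.some_injective _ (ha.symm.trans hb)

theorem exists_mem_branch {u : TreeVert m h} (hu : u ≠ root m h) : ∃ a, u ∈ branch a := by
  have hne : u.1 ≠ [] := fun h0 => hu (Subtype.ext h0)
  exact ⟨u.1.getLast hne,
    List.singleton_suffix_iff_getLast?_eq_some.2 (List.getLast?_eq_some_getLast hne)⟩

theorem root_notMem_branch (a : Fin m) : root m h ∉ branch a := by
  show ¬ [a] <:+ []
  simp

/-- This changes by one along every edge: the only edge leaving `branch a` joins `[a]` to the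
root, where the depth is zero. -/
def signedDepth (a : Fin m) (l : List (Fin m)) : ℤ :=
  if [a] <:+ l then l.length else -l.length

theorem abs_signedDepth_cons_sub_le (a x : Fin m) (l : List (Fin m)) :
    |signedDepth a (x :: l) - signedDepth a l| ≤ 1 := by
  rcases eq_or_ne l [] with rfl | hl
  · by_cases hx : a = x <;> simp [signedDepth, hx, List.suffix_cons_iff]
  · have hsuffix : [a] <:+ x :: l ↔ [a] <:+ l := by
      rw [List.suffix_cons_iff]
      simp [hl]
    by_cases ha : [a] <:+ l <;> simp [signedDepth, hsuffix, ha]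

theorem abs_signedDepth_sub_le (a : Fin m) {u v : TreeVert m h}
    (huv : (CompleteTree m h).Adj u v) : |signedDepth a u.1 - signedDepth a v.1| ≤ 1 := by
  have hchild {u v : TreeVert m h} (htail : u.1 = v.1.tail)
      (hlen : v.1.length = u.1.length + 1) : |signedDepth a v.1 - signedDepth a u.1| ≤ 1 := by
    obtain ⟨x, hx⟩ : ∃ x, v.1 = x :: u.1 := by
      cases hv : v.1 with
      | nil => simp [hv] at hlen
      | cons x t => exact ⟨x, by simp [htail, hv]⟩
    rw [hx]
    exact abs_signedDepth_cons_sub_le a x u.1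
  rcases adj_iff.1 huv with ⟨htail, hlen⟩ | ⟨htail, hlen⟩
  · rw [abs_sub_comm]
    exact hchild htail hlen
  · exact hchild htail hlen

theorem length_add_length_le_dist {a : Fin m} {u v : TreeVert m h} (hu : u ∈ branch a)
    (hv : v ∉ branch a) : u.1.length + v.1.length ≤ (CompleteTree m h).dist u v := by
  have hdist := (connected.preconnected u v).abs_sub_le_dist
    (fun w : TreeVert m h => signedDepth a w.1) (fun _ _ => abs_signedDepth_sub_le a)
  have hu' : signedDepth a u.1 = u.1.length := if_pos hu
  have hv' : signedDepth a v.1 = -v.1.length := if_neg hv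
  rw [hu', hv', sub_neg_eq_add] at hdist
  exact_mod_cast (le_abs_self _).trans hdist

end

variable {m k : ℕ}

def succEquiv (m k : ℕ) : TreeVert m (k + 1) ≃ Option (Fin m × TreeVert m k) where
  toFun
    | ⟨[], _⟩ => none
    | ⟨a :: t, ht⟩ => some (a, ⟨t, Nat.le_of_succ_le_succ ht⟩)
  invFun
    | none => ⟨[], by simp⟩
    | some (a, t) => ⟨a :: t.1, Nat.succ_le_succ t.2⟩
  left_inv := by
    rintro ⟨_ | _, _⟩ <;> rfl
  right_inv := by
    rintro (_ | _) <;> rfl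

theorem card_zero : Nat.card (TreeVert m 0) = 1 := by
  refine Nat.card_eq_one_iff_unique.2 ⟨⟨fun u v => Subtype.ext ?_⟩, inferInstance⟩
  rw [List.eq_nil_of_length_eq_zero (Nat.le_zero.1 u.2),
    List.eq_nil_of_length_eq_zero (Nat.le_zero.1 v.2)]

theorem card_succ : Nat.card (TreeVert m (k + 1)) = m * Nat.card (TreeVert m k) + 1 := by
  rw [Nat.card_congr (succEquiv m k), Finite.card_option, Nat.card_prod, Nat.card_fin]

theorem sub_one_mul_card :
    ((m : ℝ) - 1) * Nat.card (TreeVert m k) = (m : ℝ) ^ (k + 1) - 1 := by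
  induction k with
  | zero => rw [card_zero]; ring
  | succ k ih =>
    rw [card_succ]
    push_cast
    linear_combination (m : ℝ) * ih

def child (a : Fin m) : TreeVert m (k + 1) := ⟨[a], by simp⟩

theorem child_mem_branch (a : Fin m) : (child a : TreeVert m (k + 1)) ∈ branch a :=
  List.suffix_refl _

theorem ncard_branch (a : Fin m) :
    (branch a : Set (TreeVert m (k + 1))).ncard = Nat.card (TreeVert m k) := by
  rw [← Nat.card_coe_set_eq]
  let extend (t : TreeVert m k) : branch a :=
    ⟨(⟨t.1 ++ [a], by simpa using t.2⟩ : TreeVert m (k + 1)), List.suffix_append _ _⟩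
  refine (Nat.card_eq_of_bijective extend ⟨?_, ?_⟩).symm
  · intro t t' htt'
    exact Subtype.ext (List.append_cancel_right (congrArg (fun u : branch a => u.1.1) htt'))
  · rintro ⟨u, t, ht⟩
    have hlen : t.length + 1 = u.1.length := by simpa using congrArg List.length ht
    exact ⟨⟨t, by have := u.2; omega⟩, Subtype.ext (Subtype.ext ht)⟩

theorem dist_child_lt {a : Fin m} {u y : TreeVert m (k + 1)} (hu : u ∈ branch a)
    (hy : y ∉ branch a) :
    (CompleteTree m (k + 1)).dist u (child a) < (CompleteTree m (k + 1)).dist u y := by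
  obtain ⟨t, ht⟩ := id hu
  have hchild := dist_le_of_eq_append (u := u) (v := child a) ht.symm
  have hfar := length_add_length_le_dist hu hy
  have hlen : u.1.length = t.length + 1 := by simp [← ht]
  omega

theorem dist_root_lt {a : Fin m} {u y : TreeVert m (k + 1)} (hu : u ∉ branch a)
    (hy : y ∈ branch a) :
    (CompleteTree m (k + 1)).dist u (root m (k + 1)) < (CompleteTree m (k + 1)).dist u y := by
  have hroot := dist_root_le u
  have hfar := length_add_length_le_dist hy hu
  have hlen : 1 ≤ y.1.length := hy.length_le
  rw [dist_comm] at hfar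
  omega

theorem card_le_gain_child {a : Fin m} {y : TreeVert m (k + 1)} (hy : y ∉ branch a) :
    Nat.card (TreeVert m k) ≤ gain (CompleteTree m (k + 1)) (child a) y := by
  rw [← ncard_branch a]
  exact Set.ncard_le_ncard (fun u hu => dist_child_lt hu hy) (Set.toFinite _)

theorem card_le_gain_root_add {a : Fin m} {y : TreeVert m (k + 1)} (hy : y ∈ branch a) :
    Nat.card (TreeVert m (k + 1)) ≤
      gain (CompleteTree m (k + 1)) (root m (k + 1)) y + Nat.card (TreeVert m k) := by
  have hsplit := Set.ncard_add_ncard_compl (branch a : Set (TreeVert m (k + 1)))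
  have hcompl : ((branch a)ᶜ : Set (TreeVert m (k + 1))).ncard ≤
      gain (CompleteTree m (k + 1)) (root m (k + 1)) y :=
    Set.ncard_le_ncard (fun u hu => dist_root_lt hu hy) (Set.toFinite _)
  rw [ncard_branch] at hsplit
  omega

theorem gain_child_root (a : Fin m) :
    gain (CompleteTree m (k + 1)) (child a) (root m (k + 1)) = Nat.card (TreeVert m k) := by
  rw [← ncard_branch a, gain]
  congr 1
  ext u
  refine ⟨fun hu => ?_, fun hu => dist_child_lt hu (root_notMem_branch a)⟩
  by_contra hnot
  have hchild := length_add_length_le_dist (child_mem_branch a) hnot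
  have hroot := dist_root_le u
  rw [dist_comm] at hchild
  have hu : (CompleteTree m (k + 1)).dist u (child a) <
      (CompleteTree m (k + 1)).dist u (root m (k + 1)) := hu
  have hlen : (child a : TreeVert m (k + 1)).1.length = 1 := rfl
  omega

theorem sum_mu1_mul (g : TreeVert m (k + 1) → ℝ) :
    ∑ x, mu1 m (k + 1) x * g x =
      alpha1 m (k + 1) * g (root m (k + 1)) + beta1 m (k + 1) * ∑ a, g (child a) := by
  rw [← (succEquiv m k).symm.sum_comp, Fintype.sum_option, Fintype.sum_prod_type,
    Finset.mul_sum]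
  congr 1
  refine Finset.sum_congr rfl fun a _ => ?_
  rw [Finset.sum_eq_single (root m k)]
  · rfl
  · intro t _ ht
    have : t.1.length ≠ 0 := fun h0 => ht (Subtype.ext (List.eq_nil_of_length_eq_zero h0))
    simp [succEquiv, mu1, this]
  · simp

theorem alpha1_mul_pow_eq : alpha1 m (k + 1) * (m : ℝ) ^ (k + 1) =
    beta1 m (k + 1) * Nat.card (TreeVert m k) := by
  rw [alpha1, beta1, div_mul_eq_mul_div, div_mul_eq_mul_div]
  congr 1
  linear_combination (-(m : ℝ) ^ (k + 1)) * sub_one_mul_card (m := m) (k := k)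

theorem Gain_mu1_root :
    Gain (CompleteTree m (k + 1)) (mu1 m (k + 1)) (pureStrat (root m (k + 1))) =
      beta1 m (k + 1) * (m * Nat.card (TreeVert m k)) := by
  simp [Gain_pureStrat, sum_mu1_mul, gain_self, gain_child_root]

theorem Gain_mu1_root_le (hm : 2 ≤ m) (y : TreeVert m (k + 1)) :
    Gain (CompleteTree m (k + 1)) (mu1 m (k + 1)) (pureStrat (root m (k + 1))) ≤
      Gain (CompleteTree m (k + 1)) (mu1 m (k + 1)) (pureStrat y) := by
  rcases eq_or_ne y (root m (k + 1)) with rfl | hy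
  · rfl
  obtain ⟨a, hya⟩ := exists_mem_branch hy
  set N := Nat.card (TreeVert m k)
  have hroot : ((m : ℝ) - 1) * N + 1 ≤ gain (CompleteTree m (k + 1)) (root m (k + 1)) y := by
    have hcard : m * N + 1 ≤ gain (CompleteTree m (k + 1)) (root m (k + 1)) y + N :=
      card_succ (m := m) ▸ card_le_gain_root_add hya
    have : (m : ℝ) * N + 1 ≤ gain (CompleteTree m (k + 1)) (root m (k + 1)) y + N := by
      exact_mod_cast hcard
    linarith
  have hchildren :
      ((m : ℝ) - 1) * N ≤ ∑ b, (gain (CompleteTree m (k + 1)) (child b) y : ℝ) :=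
    calc ((m : ℝ) - 1) * N = ∑ b : Fin m, ((N : ℝ) - if b = a then (N : ℝ) else 0) := by
          rw [Finset.sum_sub_distrib]
          simp [sub_mul]
      _ ≤ _ := Finset.sum_le_sum fun b _ => by
          split_ifs with hba
          · simp
          · rw [sub_zero]
            exact_mod_cast card_le_gain_child fun hyb => hba (eq_of_mem_branch hyb hya)
  rw [Gain_mu1_root, Gain_pureStrat, sum_mu1_mul]
  calc beta1 m (k + 1) * (m * N)
      = alpha1 m (k + 1) * (((m : ℝ) - 1) * N + 1) + beta1 m (k + 1) * (((m : ℝ) - 1) * N) := by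
        linear_combination -alpha1_mul_pow_eq - alpha1 m (k + 1) * sub_one_mul_card
      _ ≤ _ := by
        gcongr
        · exact alpha1_nonneg hm _
        · exact beta1_nonneg hm _

end CompleteTree

/-- On the complete `m`-ary tree of height `h`, the guaranteed gain of Player 1 with
strategy `μ₁` (the minimum over vertices `y` of `Gain(T, μ₁, Z(y))`) is attained at the
root and equals `m^{h+1}(m^h - 1)/(m^{h+2} - m^{h+1} + m^h - 1)`, which equals
`(n-1)((m-1)n+1)/(n(m²-m+1)+m-1)` where `n = (m^{h+1}-1)/(m-1)`. -/
theorem stmt_12 (m h : ℕ) (hm : 2 ≤ m) (hh : 1 ≤ h)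
    (n : ℝ) (hn : n = ((m : ℝ) ^ (h + 1) - 1) / ((m : ℝ) - 1)) :
    Finset.univ.inf' Finset.univ_nonempty
        (fun y : TreeVert m h => Gain (CompleteTree m h) (mu1 m h) (pureStrat y)) =
      Gain (CompleteTree m h) (mu1 m h) (pureStrat (root m h)) ∧
    Gain (CompleteTree m h) (mu1 m h) (pureStrat (root m h)) =
      (m : ℝ) ^ (h + 1) * ((m : ℝ) ^ h - 1) /
        ((m : ℝ) ^ (h + 2) - (m : ℝ) ^ (h + 1) + (m : ℝ) ^ h - 1) ∧
    (m : ℝ) ^ (h + 1) * ((m : ℝ) ^ h - 1) /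
        ((m : ℝ) ^ (h + 2) - (m : ℝ) ^ (h + 1) + (m : ℝ) ^ h - 1) =
      (n - 1) * (((m : ℝ) - 1) * n + 1) / (n * ((m : ℝ) ^ 2 - (m : ℝ) + 1) + (m : ℝ) - 1) := by
  obtain ⟨k, rfl⟩ : ∃ k, h = k + 1 := ⟨h - 1, by omega⟩
  have hD := mu1_denom_pos hm (k + 1)
  have hm1 : (m : ℝ) - 1 ≠ 0 := by
    have : (2 : ℝ) ≤ m := by exact_mod_cast hm
    linarith
  refine ⟨le_antisymm (Finset.inf'_le _ (Finset.mem_univ _))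
    (Finset.le_inf' _ _ fun y _ => CompleteTree.Gain_mu1_root_le hm y), ?_, ?_⟩
  · rw [CompleteTree.Gain_mu1_root, beta1, eq_div_iff hD.ne']
    have hN := CompleteTree.sub_one_mul_card (m := m) (k := k)
    field_simp
    linear_combination (m : ℝ) ^ (k + 1 + 1) * hN
  · have hE : n * ((m : ℝ) ^ 2 - m + 1) + m - 1 =
        m * ((m : ℝ) ^ (k + 1 + 2) - (m : ℝ) ^ (k + 1 + 1) + (m : ℝ) ^ (k + 1) - 1) /
          (m - 1) := by
      rw [hn]
      field_simp
      ring
    rw [hE, hn]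
    field_simp
    ring
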